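/- arXiv:1209.1496 — 2 statements merged into one kernel-verified Lean document; each statement's English description precedes it below -/
import Mathlib

section
/- Let a and b be integers with 1 ≤ a < b. If M is a finite matroid with no minor isomorphic to U_{a+1,b} and r(M) > a, then τ_a(M) ≤ C(b-1, a)^{r(M) - a}, where C(b-1, a) is the binomial coefficient. -/
open Set
open scoped Classical

namespace Matroid

variable {α β : Type*}

/-- The rank of a set `X` in a matroid `M`: the maximum size of an independent subset of `X`
(appropriate for finite matroids). -/
noncomputable def rk (M : Matroid α) (X : Set α) : ℕ :=
  sSup {n | ∃ I, I ⊆ X ∧ M.Indep I ∧ I.ncard = n}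

/-- The rank `r(M)` of a matroid `M`. -/
noncomputable def rank (M : Matroid α) : ℕ := M.rk M.E

/-- The deletion `M \ D` of a set `D` from `M`. -/
def delete' (M : Matroid α) (D : Set α) : Matroid α := M ↾ (M.E \ D)

/-- The contraction `M / C` of a set `C` in `M`, defined via duality. -/
def contract' (M : Matroid α) (C : Set α) : Matroid α := (M✶.delete' C)✶

/-- `N` is a minor of `M`, i.e. `N = M / C \ D` for some sets `C` and `D`. -/
def IsMinor' (N M : Matroid α) : Prop := ∃ C D : Set α, (M.contract' C).delete' D = N

/-- An isomorphism between matroids, possibly on different ground types. -/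
def IsIso (M : Matroid α) (N : Matroid β) : Prop :=
  ∃ e : M.E ≃ N.E, ∀ I : Set M.E, M.Indep ((↑) '' I) ↔ N.Indep ((↑) '' (e '' I))

/-- `N` is isomorphic to the uniform matroid `U_{k,n}`: the ground set has `n` elements and
the independent sets are exactly the subsets with at most `k` elements. -/
def IsUnif (N : Matroid α) (k n : ℕ) : Prop :=
  N.E.Finite ∧ N.E.ncard = n ∧ ∀ I ⊆ N.E, (N.Indep I ↔ I.ncard ≤ k)

/-- `M` has a minor isomorphic to `U_{k,n}`. -/
def HasUnifMinor (M : Matroid α) (k n : ℕ) : Prop :=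
  ∃ N : Matroid α, N.IsMinor' M ∧ N.IsUnif k n

/-- `τ_a(M)`: the minimum size of a collection of subsets of `E(M)`, each of rank at most `a`,
whose union is `E(M)`. -/
noncomputable def tau (M : Matroid α) (a : ℕ) : ℕ :=
  sInf {n | ∃ 𝒞 : Finset (Set α),
    𝒞.card = n ∧ (∀ X ∈ 𝒞, X ⊆ M.E ∧ M.rk X ≤ a) ∧ M.E ⊆ ⋃₀ ↑𝒞}

/-- `M` is `d`-thick: every collection of sets, each of rank less than `r(M)`, whose union
is `E(M)`, has at least `d` members. -/
def Thick (M : Matroid α) (d : ℕ) : Prop :=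
  ∀ 𝒞 : Finset (Set α), (∀ X ∈ 𝒞, X ⊆ M.E ∧ M.rk X < M.rank) → M.E ⊆ ⋃₀ ↑𝒞 → d ≤ 𝒞.card

/-- A set `X` is `d`-thick in `M` if the restriction `M|X` is `d`-thick. -/
def ThickIn (M : Matroid α) (d : ℕ) (X : Set α) : Prop := (M ↾ X).Thick d

/-- A collection of sets is simple in `M` if its members are pairwise dissimilar,
i.e. distinct members have distinct closures. -/
def SimpleColl (M : Matroid α) (𝒳 : Finset (Set α)) : Prop :=
  ∀ X ∈ 𝒳, ∀ Y ∈ 𝒳, M.closure X = M.closure Y → X = Y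

/-- `ε_M(𝒳)`: the maximum size of a subcollection of `𝒳` that is simple in `M`. -/
noncomputable def eps (M : Matroid α) (𝒳 : Finset (Set α)) : ℕ :=
  sSup {n | ∃ 𝒴 : Finset (Set α), 𝒴 ⊆ 𝒳 ∧ M.SimpleColl 𝒴 ∧ 𝒴.card = n}

/-- `𝒳` is `d`-firm in `M`: every subcollection `𝒳'` with `|𝒳'| > |𝒳|/d` has the same rank
as `𝒳`. -/
def Firm (M : Matroid α) (d : ℕ) (𝒳 : Finset (Set α)) : Prop :=
  ∀ 𝒳' ⊆ 𝒳, 𝒳.card < d * 𝒳'.card → M.rk (⋃₀ ↑𝒳') = M.rk (⋃₀ ↑𝒳)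

/-- `ℱ` is a cover of the collection `𝒳` in `M`: every member of `𝒳` is contained in a member
of `ℱ`. -/
def CoverOf (M : Matroid α) (ℱ 𝒳 : Finset (Set α)) : Prop :=
  (∀ F ∈ ℱ, F ⊆ M.E) ∧ ∀ X ∈ 𝒳, ∃ F ∈ ℱ, X ⊆ F

/-- `ℱ` is a cover of the matroid `M`: every element of `E(M)` lies in a member of `ℱ`. -/
def CoverOfGround (M : Matroid α) (ℱ : Finset (Set α)) : Prop :=
  (∀ F ∈ ℱ, F ⊆ M.E) ∧ M.E ⊆ ⋃₀ ↑ℱ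

/-- The weight `wt^d_M(ℱ) = Σ_{F ∈ ℱ} d^{r_M(F)}`. -/
noncomputable def wt (M : Matroid α) (d : ℕ) (ℱ : Finset (Set α)) : ℕ :=
  ∑ F ∈ ℱ, d ^ M.rk F

/-- `ℱ` is a `d`-minimal cover of the collection `𝒳` in `M`. -/
def MinimalCoverOf (M : Matroid α) (d : ℕ) (ℱ 𝒳 : Finset (Set α)) : Prop :=
  M.CoverOf ℱ 𝒳 ∧ ∀ ℱ' : Finset (Set α), M.CoverOf ℱ' 𝒳 → M.wt d ℱ ≤ M.wt d ℱ'

/-- `ℱ` is a `d`-minimal cover of the matroid `M`. -/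
def MinimalCoverOfGround (M : Matroid α) (d : ℕ) (ℱ : Finset (Set α)) : Prop :=
  M.CoverOfGround ℱ ∧ ∀ ℱ' : Finset (Set α), M.CoverOfGround ℱ' → M.wt d ℱ ≤ M.wt d ℱ'

/-- `τ^d(M)`: the minimum weight of a cover of `M`. -/
noncomputable def tauW (M : Matroid α) (d : ℕ) : ℕ :=
  sInf {n | ∃ ℱ : Finset (Set α), M.CoverOfGround ℱ ∧ M.wt d ℱ = n}

/-- `𝒳` is `d`-scattered in `M`: every member of `𝒳` is `d`-thick in `M`, and
`{cl_M(X) : X ∈ 𝒳}` is a `d`-minimal cover of `𝒳` in `M`. -/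
def Scattered (M : Matroid α) (d : ℕ) (𝒳 : Finset (Set α)) : Prop :=
  (∀ X ∈ 𝒳, M.ThickIn d X) ∧ M.MinimalCoverOf d (𝒳.image M.closure) 𝒳

/-- `(M, 𝒮; L)` is an `(a, q, h, d)`-pyramid, where `h = L.length` and `L` lists the
elements `e_1, …, e_h`. -/
def IsPyramid (M : Matroid α) (𝒮 : Finset (Set α)) (L : List α) (a q d : ℕ) : Prop :=
  L.Nodup ∧ M.Indep {x | x ∈ L} ∧
  𝒮.Nonempty ∧
  (∀ S ∈ 𝒮, S ⊆ M.E ∧ M.rk S = a) ∧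
  (∀ S ∈ 𝒮, M.rk (S ∪ {x | x ∈ L}) = M.rk S + M.rk {x | x ∈ L}) ∧
  (∀ i < L.length, ∀ S ∈ 𝒮, ∃ f : Fin q → Set α,
    (∀ j, f j ∈ 𝒮) ∧
    (∀ j k, j ≠ k →
      (M.contract' {x | x ∈ L.take i}).closure (f j) ≠
        (M.contract' {x | x ∈ L.take i}).closure (f k)) ∧
    (∀ j, (M.contract' {x | x ∈ L.take (i+1)}).closure (f j) =
      (M.contract' {x | x ∈ L.take (i+1)}).closure S)) ∧
  (∀ S ∈ 𝒮, M.ThickIn d S)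

/-- `M` is representable over the field `F`. -/
def RepresentableOver (M : Matroid α) (F : Type*) [Field F] : Prop :=
  ∃ (n : ℕ) (φ : α → (Fin n → F)),
    ∀ I ⊆ M.E, (M.Indep I ↔ LinearIndependent F (fun x : I => φ x))

end Matroid

/-!
Induction on `r(M)`. Contracting an element `e` of a basis lowers the rank by one, and a set `Y`
of rank at most `a` in `M / e` gives the set `Y ∪ {e}` of rank at most `a + 1` in `M`; so it
suffices to cover a set `X` of rank `a + 1` by `C(b-1, a)` sets of rank at most `a`. For this,
take `S ⊆ X` maximal among the sets that contain a basis of `X` and whose `(a+1)`-subsets are all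
independent. Then `M | S ≅ U_{a+1,|S|}`, so `|S| ≤ b - 1`, and by maximality every `x ∈ X` is
spanned by at most `a` elements of `S`; hence the closures of the `a`-subsets of `S` cover `X`.
-/

namespace Matroid

section

variable {α : Type*} {M N : Matroid α} {C I S X Y : Set α} {x : α} {a b k n : ℕ}

lemma isMinor'_iff : N.IsMinor' M ↔ N ≤m M := by
  constructor <;> rintro ⟨C, D, h⟩ <;> exact ⟨C, D, h.symm⟩

lemma contract_isMinor (M : Matroid α) (C : Set α) : M ／ C ≤m M := by
  simpa using M.contract_delete_isMinor C ∅

lemma restrict_isMinor (hS : S ⊆ M.E) : M ↾ S ≤m M := by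
  simpa [delete_compl hS] using M.contract_delete_isMinor ∅ (M.E \ S)

lemma HasUnifMinor.of_isMinor (h : N.HasUnifMinor k n) (hNM : N ≤m M) : M.HasUnifMinor k n := by
  obtain ⟨N', hN', hunif⟩ := h
  exact ⟨N', isMinor'_iff.2 ((isMinor'_iff.1 hN').trans hNM), hunif⟩

lemma Indep.eRk_contract_add_encard (hC : M.Indep C) (hX : X ⊆ M.E \ C) :
    (M ／ C).eRk X + C.encard = M.eRk (X ∪ C) := by
  obtain ⟨J, hJ⟩ := (M ／ C).exists_isBasis X (by rwa [contract_ground])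
  rw [← hJ.encard_eq_eRk, ← (hC.union_isBasis_union_of_contract_isBasis hJ).encard_eq_eRk,
    encard_union_eq (disjoint_sdiff_left.mono_left (hJ.subset.trans hX))]

section RankFinite

variable [M.RankFinite]

lemma IsBasis'.ncard_eq_rk (hI : M.IsBasis' I X) : I.ncard = M.rk X := by
  refine Eq.symm <| IsGreatest.csSup_eq ⟨⟨I, hI.subset, hI.indep, rfl⟩, ?_⟩
  rintro _ ⟨J, hJX, hJ, rfl⟩
  have h := hJ.encard_le_eRk_of_subset hJX
  rwa [← hI.encard_eq_eRk, ← hJ.finite.cast_ncard_eq, ← hI.indep.finite.cast_ncard_eq,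
    Nat.cast_le] at h

lemma cast_rk_eq_eRk (M : Matroid α) [M.RankFinite] (X : Set α) : (M.rk X : ℕ∞) = M.eRk X := by
  obtain ⟨I, hI⟩ := M.exists_isBasis' X
  rw [← hI.ncard_eq_rk, ← hI.encard_eq_eRk, hI.indep.finite.cast_ncard_eq]

lemma rk_mono (hXY : X ⊆ Y) : M.rk X ≤ M.rk Y := by
  have h := M.eRk_mono hXY
  rwa [← cast_rk_eq_eRk, ← cast_rk_eq_eRk, Nat.cast_le] at h

lemma rk_le_ncard (hX : X.Finite) : M.rk X ≤ X.ncard := by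
  have h := M.eRk_le_encard X
  rwa [← cast_rk_eq_eRk, ← hX.cast_ncard_eq, Nat.cast_le] at h

lemma rk_closure_eq (M : Matroid α) [M.RankFinite] (X : Set α) :
    M.rk (M.closure X) = M.rk X := by
  rw [← ENat.natCast_inj, cast_rk_eq_eRk, cast_rk_eq_eRk, eRk_closure_eq]

lemma Indep.ncard_le_rk (hI : M.Indep I) (hIX : I ⊆ X) : I.ncard ≤ M.rk X := by
  have h := hI.encard_le_eRk_of_subset hIX
  rwa [← hI.finite.cast_ncard_eq, ← cast_rk_eq_eRk, Nat.cast_le] at h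

lemma Indep.rk_contract_add_ncard (hC : M.Indep C) (hX : X ⊆ M.E \ C) :
    (M ／ C).rk X + C.ncard = M.rk (X ∪ C) := by
  rw [← ENat.natCast_inj, Nat.cast_add, cast_rk_eq_eRk, cast_rk_eq_eRk,
    hC.finite.cast_ncard_eq, hC.eRk_contract_add_encard hX]

lemma Indep.rank_contract_add_ncard (hC : M.Indep C) : (M ／ C).rank + C.ncard = M.rank := by
  rw [rank, rank, contract_ground, hC.rk_contract_add_ncard subset_rfl,
    sdiff_union_of_subset hC.subset_ground]

end RankFinite

def IsRkCover (M : Matroid α) (a : ℕ) (𝒞 : Finset (Set α)) (X : Set α) : Prop :=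
  (∀ W ∈ 𝒞, W ⊆ M.E ∧ M.rk W ≤ a) ∧ X ⊆ ⋃₀ ↑𝒞

lemma tau_le_card {𝒞 : Finset (Set α)} (h : M.IsRkCover a 𝒞 M.E) : M.tau a ≤ 𝒞.card :=
  Nat.sInf_le ⟨𝒞, rfl, h⟩

lemma isRkCover_singleton (hXE : X ⊆ M.E) (hX : M.rk X ≤ a) : M.IsRkCover a {X} X := by
  simp [IsRkCover, hXE, hX]

lemma IsRkCover.mono {𝒞 : Finset (Set α)} (h : M.IsRkCover a 𝒞 X) (hYX : Y ⊆ X) :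
    M.IsRkCover a 𝒞 Y :=
  ⟨h.1, hYX.trans h.2⟩

lemma IsRkCover.biUnion {𝒞 : Finset (Set α)} {𝒟 : Set α → Finset (Set α)} {f : Set α → Set α}
    (h : ∀ Y ∈ 𝒞, M.IsRkCover a (𝒟 Y) (f Y)) : M.IsRkCover a (𝒞.biUnion 𝒟) (⋃ Y ∈ 𝒞, f Y) := by
  refine ⟨fun W hW => ?_, iUnion₂_subset fun Y hY => (h Y hY).2.trans ?_⟩
  · obtain ⟨Y, hY, hWY⟩ := Finset.mem_biUnion.1 hW
    exact (h Y hY).1 W hWY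
  · exact sUnion_mono fun W hW => Finset.mem_biUnion.2 ⟨Y, hY, hW⟩

lemma exists_isRkCover_closure [M.Finite] (hSE : S ⊆ M.E) (haS : a ≤ S.ncard)
    (hX : ∀ x ∈ X, ∃ D ⊆ S, D.ncard ≤ a ∧ x ∈ M.closure D) :
    ∃ 𝒞 : Finset (Set α), 𝒞.card ≤ S.ncard.choose a ∧ M.IsRkCover a 𝒞 X := by
  have hS : S.Finite := M.ground_finite.subset hSE
  refine ⟨(hS.toFinset.powersetCard a).image fun T : Finset α => M.closure T, ?_, ?_,
    fun x hx => ?_⟩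
  · calc _ ≤ (hS.toFinset.powersetCard a).card := Finset.card_image_le
      _ = S.ncard.choose a := by rw [Finset.card_powersetCard, ncard_eq_toFinset_card _ hS]
  · simp only [Finset.mem_image, Finset.mem_powersetCard]
    rintro _ ⟨T, ⟨-, hT⟩, rfl⟩
    refine ⟨M.closure_subset_ground _, ?_⟩
    rw [rk_closure_eq]
    exact (rk_le_ncard T.finite_toSet).trans (by rw [ncard_coe_finset, hT])
  obtain ⟨D, hDS, hDa, hxD⟩ := hX x hx
  obtain ⟨T, hDT, hTS, hTa⟩ := exists_subsuperset_card_eq hDS hDa haS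
  have hT : T.Finite := hS.subset hTS
  refine mem_sUnion.2 ⟨M.closure T, ?_, M.closure_subset_closure hDT hxD⟩
  refine Finset.mem_image.2 ⟨hT.toFinset, Finset.mem_powersetCard.2 ⟨?_, ?_⟩, ?_⟩
  · exact hT.toFinset_subset_toFinset.2 hTS
  · rw [← ncard_eq_toFinset_card _ hT, hTa]
  · rw [hT.coe_toFinset]

lemma exists_subset_ncard_le_mem_closure (hx : x ∈ M.E)
    (hS : ∀ D ⊆ S, D.ncard ≤ k + 1 → M.Indep D)
    (hxS : ¬ ∀ D ⊆ insert x S, D.ncard ≤ k + 1 → M.Indep D) :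
    ∃ D ⊆ S, D.ncard ≤ k ∧ x ∈ M.closure D := by
  push Not at hxS
  obtain ⟨D, hDS, hDk, hD⟩ := hxS
  have hxD : x ∈ D := by
    by_contra hxD
    exact hD (hS D (fun y hy => (hDS hy).resolve_left (ne_of_mem_of_not_mem hy hxD)) hDk)
  have hDS' : D \ {x} ⊆ S := fun y hy => (hDS hy.1).resolve_left hy.2
  have hDk' : (D \ {x}).ncard ≤ k := by rw [ncard_sdiff_singleton_of_mem hxD]; omega
  refine ⟨D \ {x}, hDS', hDk', (hS _ hDS' (by omega)).mem_closure_iff'.2 ⟨hx, fun h => ?_⟩⟩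
  rw [insert_sdiff_singleton, insert_eq_of_mem hxD] at h
  exact absurd h hD

lemma ncard_lt_of_not_hasUnifMinor [M.Finite] (hSE : S ⊆ M.E)
    (hS : ∀ D ⊆ S, D.ncard ≤ k → M.Indep D) (hrk : M.rk S ≤ k) (hU : ¬ M.HasUnifMinor k n) :
    S.ncard < n := by
  by_contra! hn
  obtain ⟨S', hS'S, hS'n⟩ := exists_subset_card_eq hn
  refine hU ⟨M ↾ S', isMinor'_iff.2 (restrict_isMinor (hS'S.trans hSE)),
    M.ground_finite.subset (hS'S.trans hSE), hS'n, fun J hJ => ?_⟩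
  rw [restrict_indep_iff]
  exact ⟨fun h => (h.1.ncard_le_rk (h.2.trans hS'S)).trans hrk,
    fun h => ⟨hS J (hJ.trans hS'S) h, hJ⟩⟩

lemma exists_isRkCover_of_rk_le_succ [M.Finite] (ha : 1 ≤ a) (hab : a < b)
    (hU : ¬ M.HasUnifMinor (a + 1) b) (hXE : X ⊆ M.E) (hX : M.rk X ≤ a + 1) :
    ∃ 𝒞 : Finset (Set α), 𝒞.card ≤ (b - 1).choose a ∧ M.IsRkCover a 𝒞 X := by
  obtain hXa | hXa := le_or_gt (M.rk X) a
  · refine ⟨{X}, ?_, isRkCover_singleton hXE hXa⟩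
    rw [Finset.card_singleton]
    exact Nat.choose_pos (by omega)
  obtain ⟨I, hI⟩ := M.exists_isBasis' X
  have hXfin : X.Finite := M.ground_finite.subset hXE
  obtain ⟨S, hIS, hSmax⟩ := (hXfin.finite_subsets.subset fun S hS => hS.1).exists_le_maximal
    (a := I) (s := {S | S ⊆ X ∧ ∀ D ⊆ S, D.ncard ≤ a + 1 → M.Indep D})
    ⟨hI.subset, fun D hD _ => hI.indep.subset hD⟩
  obtain ⟨hSX, hS⟩ := hSmax.prop
  have hSb : S.ncard < b :=
    ncard_lt_of_not_hasUnifMinor (hSX.trans hXE) hS ((rk_mono hSX).trans hX) hU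
  have haS : a ≤ S.ncard := by
    have := ncard_le_ncard hIS (hXfin.subset hSX)
    rw [hI.ncard_eq_rk] at this
    omega
  obtain ⟨𝒞, h𝒞, hcov⟩ := exists_isRkCover_closure (X := X) (hSX.trans hXE) haS fun x hx => by
    by_cases hxS : x ∈ S
    · exact ⟨{x}, singleton_subset_iff.2 hxS, by simpa using ha, M.mem_closure_self x (hXE hx)⟩
    exact exists_subset_ncard_le_mem_closure (hXE hx) hS fun hins =>
      hxS (hSmax.mem_of_prop_insert ⟨insert_subset hx hSX, hins⟩)
  exact ⟨𝒞, h𝒞.trans (Nat.choose_le_choose a (by omega)), hcov⟩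

lemma exists_isRkCover_card_le_pow (ha : 1 ≤ a) (hab : a < b) (M : Matroid α) [M.Finite]
    (hU : ¬ M.HasUnifMinor (a + 1) b) :
    ∃ 𝒞 : Finset (Set α), 𝒞.card ≤ (b - 1).choose a ^ (M.rank - a) ∧ M.IsRkCover a 𝒞 M.E := by
  induction hr : M.rank using Nat.strong_induction_on generalizing M with
  | _ r ih =>
    obtain hra | hra := le_or_gt r a
    · exact ⟨{M.E}, by simp [Nat.sub_eq_zero_of_le hra],
        isRkCover_singleton subset_rfl (hr.trans_le hra)⟩
    obtain ⟨B, hB⟩ := M.exists_isBase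
    have hB2 : 1 < B.ncard := by rw [hB.isBasis_ground.isBasis'.ncard_eq_rk, ← rank]; omega
    obtain ⟨e, f, he, hf, hef⟩ := (one_lt_ncard_iff hB.finite).1 hB2
    have heI : M.Indep {e} := hB.indep.subset (singleton_subset_iff.2 he)
    have hrank : (M ／ {e}).rank = r - 1 := by
      have := heI.rank_contract_add_ncard
      rw [ncard_singleton] at this
      omega
    obtain ⟨𝒞, h𝒞, hcov⟩ :=
      ih (r - 1) (by omega) (M ／ {e}) (fun h => hU (h.of_isMinor (M.contract_isMinor _))) hrank
    have hstep : ∀ Y ∈ 𝒞, ∃ 𝒟 : Finset (Set α),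
        𝒟.card ≤ (b - 1).choose a ∧ M.IsRkCover a 𝒟 (Y ∪ {e}) := by
      intro Y hY
      obtain ⟨hYE, hYa⟩ := hcov.1 Y hY
      rw [contract_ground] at hYE
      refine exists_isRkCover_of_rk_le_succ ha hab hU
        (union_subset (hYE.trans sdiff_subset) heI.subset_ground) ?_
      rw [← heI.rk_contract_add_ncard hYE, ncard_singleton]
      omega
    choose! 𝒟 h𝒟card h𝒟 using hstep
    refine ⟨𝒞.biUnion 𝒟, ?_, (IsRkCover.biUnion h𝒟).mono fun y hy => ?_⟩
    · calc (𝒞.biUnion 𝒟).card ≤ 𝒞.card * (b - 1).choose a :=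
            Finset.card_biUnion_le_card_mul _ _ _ h𝒟card
        _ ≤ (b - 1).choose a ^ (r - 1 - a) * (b - 1).choose a := Nat.mul_le_mul_right _ h𝒞
        _ = (b - 1).choose a ^ (r - a) := by rw [← pow_succ]; congr 1; omega
    have hcovers (z : α) (hz : z ∈ M.E) (hze : z ≠ e) : ∃ Y ∈ 𝒞, z ∈ Y :=
      mem_sUnion.1 (hcov.2 (by rw [contract_ground]; exact ⟨hz, hze⟩))
    by_cases hye : y = e
    · obtain ⟨Y, hY, -⟩ := hcovers f (hB.subset_ground hf) hef.symm
      exact mem_biUnion hY (Or.inr hye)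
    · obtain ⟨Y, hY, hyY⟩ := hcovers y hy hye
      exact mem_biUnion hY (Or.inl hyY)

end

theorem statement1_general {α : Type*} (a b : ℕ) (ha : 1 ≤ a) (hab : a < b)
    (M : Matroid α) (hM : M.Finite) (hU : ¬ M.HasUnifMinor (a + 1) b) :
    M.tau a ≤ ((b - 1).choose a) ^ (M.rank - a) := by
  obtain ⟨𝒞, h𝒞, hcov⟩ := exists_isRkCover_card_le_pow ha hab M hU
  exact (tau_le_card hcov).trans h𝒞

/-- If `1 ≤ a < b` and `M` is a finite matroid with no `U_{a+1,b}`-minor and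
`r(M) > a`, then `τ_a(M) ≤ C(b-1,a)^{r(M)-a}`. -/
theorem statement1 {α : Type*} (a b : ℕ) (ha : 1 ≤ a) (hab : a < b)
    (M : Matroid α) (hM : M.Finite) (hU : ¬ M.HasUnifMinor (a + 1) b) (hr : a < M.rank) :
    M.tau a ≤ ((b - 1).choose a) ^ (M.rank - a) :=
  statement1_general a b ha hab M hM hU

end Matroid
end

section
/- If (M, 𝒮; e_1, …, e_h) is an (a, q, h, d)-pyramid and i, j are integers with 0 ≤ i ≤ j ≤ h, then (M / {e_{i+1}, …, e_j}, 𝒮; e_1, …, e_i, e_{j+1}, …, e_h) is an (a, q, h - (j - i), d)-pyramid. -/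
open Set
open scoped Classical

/-!
Write `C = {e_{i+1}, …, e_j}`. Skewness of `S ∈ 𝒮` to the independent set `{e_1, …, e_h}` is
the same as independence of `{e_1, …, e_h}` in `M ／ S`; in this form it shows at once that
contracting `C` changes neither the rank nor the restriction of `S`, so ranks and thickness
survive. Level `k ≥ i` of the new pyramid is level `k + (j - i)` of the old one. For a level
`k < i`, similarity in `M_{k+1}` survives contracting `C`, and so does dissimilarity in `M_k`,
because `e_{k+1} ∉ cl(S ∪ C ∪ {e_1, …, e_k})` and `cl(X ∪ e) ∩ cl(Z) ⊆ cl(X)` whenever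
`X ⊆ Z` and `e ∉ cl(Z)`.
-/

namespace List

variable {α : Type*} {l : List α} {i j k : ℕ}

theorem take_append_drop_take (hij : i ≤ j) : l.take i ++ (l.take j).drop i = l.take j := by
  conv_rhs => rw [← take_append_drop i (l.take j), take_take, min_eq_left hij]

theorem perm_take_append_drop_append_drop_take (hij : i ≤ j) :
    (l.take i ++ l.drop j ++ (l.take j).drop i).Perm l := by
  calc (l.take i ++ l.drop j ++ (l.take j).drop i).Perm
        (l.take i ++ (l.take j).drop i ++ l.drop j) := by
        rw [append_assoc, append_assoc]
        exact perm_append_comm.append_left _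
    _ = l := by rw [take_append_drop_take hij, take_append_drop]

theorem take_append_drop_take_of_le (hki : k ≤ i) (hi : i ≤ l.length) :
    (l.take i ++ l.drop j).take k = l.take k := by
  rw [take_append_of_le_length (by rw [length_take]; omega), take_take, min_eq_left hki]

theorem perm_drop_take_append_take_append_drop (hik : i ≤ k) (hij : i ≤ j) (hj : j ≤ l.length) :
    ((l.take j).drop i ++ (l.take i ++ l.drop j).take k).Perm (l.take (k + (j - i))) := by
  have hi : (l.take i).length = i := length_take_of_le (hij.trans hj)
  calc ((l.take j).drop i ++ (l.take i ++ l.drop j).take k).Perm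
        (l.take i ++ (l.take j).drop i ++ (l.drop j).take (k - i)) := by
        rw [take_append, hi, take_take, min_eq_right hik, ← append_assoc]
        exact perm_append_comm.append_right _
    _ = l.take (k + (j - i)) := by
        rw [take_append_drop_take hij, show k + (j - i) = j + (k - i) by omega, take_add]

theorem Nodup.disjoint_take_drop_take (hnd : l.Nodup) (hij : i ≤ j) :
    (l.take i).Disjoint ((l.take j).drop i) := by
  have h := hnd.sublist (take_sublist j l)
  rw [← take_append_drop_take hij] at h
  exact fun a hi hd ↦ (nodup_append.1 h).2.2 a hi a hd rfl

theorem setOf_mem_take_add_one (hk : k < l.length) :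
    {x | x ∈ l.take (k + 1)} = insert l[k] {x | x ∈ l.take k} := by
  ext x
  simp only [take_add_one, getElem?_eq_getElem hk, Option.toList_some, mem_ofPred_eq,
    mem_append, mem_singleton, Set.mem_insert_iff]
  exact or_comm

end List

namespace Matroid

section

variable {α : Type*} {M : Matroid α} {B I J X Y Z A C : Set α} {e : α}

theorem contract'_eq_contract (M : Matroid α) (C : Set α) : M.contract' C = M ／ C := rfl

theorem closure_insert_inter_closure_subset_closure (hXZ : X ⊆ Z) (he : e ∉ M.closure Z) :
    M.closure (insert e X) ∩ M.closure Z ⊆ M.closure X := by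
  rintro y ⟨hyX, hyZ⟩
  by_contra hy
  apply he
  rw [← closure_insert_eq_of_mem_closure hyZ]
  exact M.closure_subset_closure (insert_subset_insert hXZ) (mem_closure_insert hy hyX)

theorem closure_subset_closure_of_insert_of_union (he : e ∉ M.closure (X ∪ C))
    (hins : M.closure (insert e X) = M.closure (insert e Y))
    (hunion : M.closure (X ∪ C) = M.closure (Y ∪ C)) : M.closure Y ⊆ M.closure X := by
  rw [← closure_inter_ground]
  refine closure_subset_closure_of_subset_closure fun y ⟨hyY, hyE⟩ ↦
    closure_insert_inter_closure_subset_closure subset_union_left he ⟨?_, ?_⟩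
  · exact hins ▸ M.mem_closure_of_mem' (mem_insert_of_mem e hyY)
  · exact hunion ▸ M.mem_closure_of_mem' (mem_union_left C hyY)

theorem closure_eq_closure_of_insert_of_union (he : e ∉ M.closure (X ∪ C))
    (hins : M.closure (insert e X) = M.closure (insert e Y))
    (hunion : M.closure (X ∪ C) = M.closure (Y ∪ C)) : M.closure X = M.closure Y :=
  (closure_subset_closure_of_insert_of_union he hins hunion).antisymm'
    (closure_subset_closure_of_insert_of_union (hunion ▸ he) hins.symm hunion.symm)

theorem contract_closure_eq_contract_closure_iff :
    (M ／ C).closure X = (M ／ C).closure Y ↔ M.closure (X ∪ C) = M.closure (Y ∪ C) := by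
  have hcl : ∀ Z, M.closure ((M ／ C).closure Z ∪ C) = M.closure (Z ∪ C) := fun Z ↦ by
    rw [contract_closure_eq, sdiff_union_self, closure_union_closure_left_eq, union_assoc,
      union_self]
  refine ⟨fun h ↦ ?_, fun h ↦ ?_⟩
  · rw [← hcl X, h, hcl]
  · rw [contract_closure_eq, contract_closure_eq, h]

theorem contract_closure_congr (h : M.closure X = M.closure Y) (C : Set α) :
    (M ／ C).closure X = (M ／ C).closure Y :=
  contract_closure_eq_contract_closure_iff.2 (closure_union_congr_left h)

theorem contract_indep_iff_of_contract_indep (h : (M ／ X).Indep C) (hIX : I ⊆ X) :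
    (M ／ C).Indep I ↔ M.Indep I := by
  rw [h.of_contract.contract_indep_iff]
  refine ⟨fun hI ↦ hI.2.subset subset_union_left, fun hI ↦ ⟨?_, ?_⟩⟩
  · exact (subset_sdiff.1 h.subset_ground).2.symm.mono_left hIX
  · obtain ⟨J, hJ, hIJ⟩ := hI.subset_isBasis'_of_subset hIX
    rw [union_comm]
    exact (hJ.contract_indep_iff.1 h).1.subset (union_subset_union_right C hIJ)

theorem contract_restrict_eq_restrict (h : (M ／ X).Indep C) : (M ／ C) ↾ X = M ↾ X :=
  ext_indep rfl fun I hIX ↦ by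
    simp only [restrict_indep_iff, contract_indep_iff_of_contract_indep h hIX]

theorem rk_contract_eq (h : (M ／ X).Indep C) : (M ／ C).rk X = M.rk X := by
  simp only [rk]
  congr! 3 with n
  exact exists_congr fun I ↦
    and_congr_right fun hIX ↦ and_congr_left' (contract_indep_iff_of_contract_indep h hIX)

theorem notMem_closure_of_contract_indep (h : (M ／ X).Indep (insert e A)) (heA : e ∉ A) :
    e ∉ M.closure (X ∪ A) := by
  have hmem := ((h.subset (subset_insert e A)).insert_indep_iff_of_notMem heA).1 h
  rw [contract_closure_eq, contract_ground] at hmem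
  rw [union_comm]
  exact fun hcl ↦ hmem.2 ⟨hcl, hmem.1.2⟩

section Rank

variable [M.RankFinite]

theorem IsBasis'.rk_eq_ncard (hI : M.IsBasis' I X) : M.rk X = I.ncard := by
  refine IsGreatest.csSup_eq ⟨⟨I, hI.subset, hI.indep, rfl⟩, ?_⟩
  rintro _ ⟨J, hJX, hJ, rfl⟩
  rw [← Nat.cast_le (α := ℕ∞), hJ.finite.cast_ncard_eq, hI.indep.finite.cast_ncard_eq,
    hI.encard_eq_eRk]
  exact hJ.encard_le_eRk_of_subset hJX

theorem Indep.rk_eq_ncard (hI : M.Indep I) : M.rk I = I.ncard :=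
  hI.isBasis_self.isBasis'.rk_eq_ncard

theorem natCast_rk (X : Set α) : (M.rk X : ℕ∞) = M.eRk X := by
  obtain ⟨I, hI⟩ := M.exists_isBasis' X
  rw [hI.rk_eq_ncard, hI.indep.finite.cast_ncard_eq, hI.encard_eq_eRk]

theorem rk_union_eq_add_iff_contract_indep (hJ : M.Indep J) :
    M.rk (X ∪ J) = M.rk X + M.rk J ↔ (M ／ X).Indep J := by
  obtain ⟨I, hI⟩ := M.exists_isBasis' X
  have hIfin := hI.indep.finite
  have hIJfin := hIfin.union hJ.finite
  have hXI : M.rk (X ∪ J) = M.rk (I ∪ J) := by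
    rw [← Nat.cast_inj (R := ℕ∞), natCast_rk, natCast_rk, hI.eRk_eq_eRk_union]
  rw [hI.contract_indep_iff, hI.rk_eq_ncard, hJ.rk_eq_ncard, hXI, union_comm J]
  refine ⟨fun h ↦ ?_, fun ⟨hIJ, hXJ⟩ ↦ ?_⟩
  · obtain ⟨B, hB⟩ := M.exists_isBasis' (I ∪ J)
    rw [hB.rk_eq_ncard] at h
    have hcard := ncard_union_add_ncard_inter I J hIfin hJ.finite
    have hBle := ncard_le_ncard hB.subset hIJfin
    have hIJ : M.Indep (I ∪ J) := eq_of_subset_of_ncard_le hB.subset (by omega) hIJfin ▸ hB.indep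
    have hdisj : Disjoint I J := by
      rw [disjoint_iff_inter_eq_empty, ← ncard_eq_zero (hIfin.subset inter_subset_left)]
      omega
    refine ⟨hIJ, disjoint_left.2 fun x hxX hxJ ↦ ?_⟩
    have hxI : x ∉ I := fun hxI ↦ hdisj.notMem_of_mem_left hxI hxJ
    have hxcl : x ∈ M.closure I :=
      hI.closure_eq_closure ▸ M.mem_closure_of_mem' hxX (hJ.subset_ground hxJ)
    exact ((hI.indep.insert_indep_iff_of_notMem hxI).1
      (hIJ.subset (insert_subset (Or.inr hxJ) subset_union_left))).2 hxcl
  · rw [hIJ.rk_eq_ncard, ncard_union_eq (hXJ.mono_left hI.subset) hIfin hJ.finite]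

end Rank

section Pyramid

variable {𝒮 : Finset (Set α)} {q : ℕ}

def Spreads (M : Matroid α) (𝒮 : Finset (Set α)) (q : ℕ) (A B : Set α) : Prop :=
  ∀ S ∈ 𝒮, ∃ f : Fin q → Set α, (∀ j, f j ∈ 𝒮) ∧
    (∀ j k, j ≠ k → (M ／ A).closure (f j) ≠ (M ／ A).closure (f k)) ∧
    ∀ j, (M ／ B).closure (f j) = (M ／ B).closure S

theorem spreads_contract_iff :
    (M ／ C).Spreads 𝒮 q A B ↔ M.Spreads 𝒮 q (C ∪ A) (C ∪ B) := by
  simp only [Spreads, contract_contract]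

theorem Spreads.contract (h : M.Spreads 𝒮 q A (insert e A))
    (he : ∀ S ∈ 𝒮, e ∉ M.closure (S ∪ A ∪ C)) : (M ／ C).Spreads 𝒮 q A (insert e A) := by
  intro S hS
  obtain ⟨f, hf𝒮, hdis, hsim⟩ := h S hS
  have hsim' : ∀ j, M.closure (insert e (f j ∪ A)) = M.closure (insert e (S ∪ A)) := fun j ↦ by
    simpa only [contract_closure_eq_contract_closure_iff, union_insert] using hsim j
  refine ⟨f, hf𝒮, fun j k hjk hcl ↦ hdis j k hjk ?_, fun j ↦ ?_⟩
  · rw [contract_contract, contract_closure_eq_contract_closure_iff] at hcl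
    rw [contract_closure_eq_contract_closure_iff]
    refine closure_eq_closure_of_insert_of_union (he _ (hf𝒮 j))
      ((hsim' j).trans (hsim' k).symm) ?_
    simpa only [union_assoc, union_comm C] using hcl
  · rw [contract_comm]
    exact contract_closure_congr (hsim j) C

theorem Spreads.contract_of_contract_indep (h : M.Spreads 𝒮 q A (insert e A))
    (hskew : ∀ S ∈ 𝒮, (M ／ S).Indep (insert e (A ∪ C))) (he : e ∉ A ∪ C) :
    (M ／ C).Spreads 𝒮 q A (insert e A) :=
  h.contract fun S hS ↦ union_assoc S A C ▸ notMem_closure_of_contract_indep (hskew S hS) he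

variable {L : List α} {i j k : ℕ}

theorem spreads_contract_drop_take_of_lt (hnd : L.Nodup) (hki : k < i) (hij : i ≤ j)
    (hj : j ≤ L.length) (hskew : ∀ S ∈ 𝒮, (M ／ S).Indep {x | x ∈ L})
    (hspread : M.Spreads 𝒮 q {x | x ∈ L.take k} {x | x ∈ L.take (k + 1)}) :
    (M ／ {x | x ∈ (L.take j).drop i}).Spreads 𝒮 q {x | x ∈ (L.take i ++ L.drop j).take k}
      {x | x ∈ (L.take i ++ L.drop j).take (k + 1)} := by
  have hkL : k < L.length := by omega
  rw [List.take_append_drop_take_of_le hki.le (hij.trans hj),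
    List.take_append_drop_take_of_le hki (hij.trans hj), List.setOf_mem_take_add_one hkL]
  rw [List.setOf_mem_take_add_one hkL] at hspread
  refine hspread.contract_of_contract_indep (fun S hS ↦ (hskew S hS).subset ?_) ?_
  · exact insert_subset (List.getElem_mem _) (union_subset (fun x hx ↦ List.mem_of_mem_take hx)
      fun x hx ↦ List.mem_of_mem_take (List.mem_of_mem_drop hx))
  · rintro (h | h)
    · obtain ⟨m, hm, hmk⟩ := List.mem_take_iff_getElem.1 h
      have := hnd.getElem_inj_iff.1 hmk
      omega
    · exact hnd.disjoint_take_drop_take hij (List.mem_take_iff_getElem.2 ⟨k, by omega, rfl⟩) h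

theorem spreads_contract_drop_take_of_le (hik : i ≤ k) (hij : i ≤ j) (hj : j ≤ L.length)
    (hspread : M.Spreads 𝒮 q {x | x ∈ L.take (k + (j - i))} {x | x ∈ L.take (k + (j - i) + 1)}) :
    (M ／ {x | x ∈ (L.take j).drop i}).Spreads 𝒮 q {x | x ∈ (L.take i ++ L.drop j).take k}
      {x | x ∈ (L.take i ++ L.drop j).take (k + 1)} := by
  have hprefix : ∀ n, i ≤ n → {x | x ∈ (L.take j).drop i} ∪ {x | x ∈ (L.take i ++ L.drop j).take n}
      = {x | x ∈ L.take (n + (j - i))} := fun n hn ↦ by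
    ext x
    simp [← (List.perm_drop_take_append_take_append_drop hn hij hj).mem_iff]
  rwa [spreads_contract_iff, hprefix k hik, hprefix (k + 1) (by omega),
    show k + 1 + (j - i) = k + (j - i) + 1 by omega]

theorem isPyramid_iff [M.RankFinite] {a d : ℕ} :
    M.IsPyramid 𝒮 L a q d ↔ L.Nodup ∧ M.Indep {x | x ∈ L} ∧ 𝒮.Nonempty ∧
      (∀ S ∈ 𝒮, S ⊆ M.E ∧ M.rk S = a) ∧ (∀ S ∈ 𝒮, (M ／ S).Indep {x | x ∈ L}) ∧
      (∀ k < L.length, M.Spreads 𝒮 q {x | x ∈ L.take k} {x | x ∈ L.take (k + 1)}) ∧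
      ∀ S ∈ 𝒮, M.ThickIn d S := by
  refine ⟨fun ⟨hnd, hL, hne, hrk, hskew, hspread, hthick⟩ ↦
    ⟨hnd, hL, hne, hrk, fun S hS ↦ ?_, hspread, hthick⟩,
    fun ⟨hnd, hL, hne, hrk, hskew, hspread, hthick⟩ ↦
    ⟨hnd, hL, hne, hrk, fun S hS ↦ ?_, hspread, hthick⟩⟩
  · exact (rk_union_eq_add_iff_contract_indep hL).1 (hskew S hS)
  · exact (rk_union_eq_add_iff_contract_indep hL).2 (hskew S hS)

end Pyramid

end

theorem statement16_general {α : Type*} (a q d : ℕ)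
    (M : Matroid α) (hM : M.Finite) (𝒮 : Finset (Set α)) (L : List α)
    (hP : M.IsPyramid 𝒮 L a q d) (i j : ℕ) (hij : i ≤ j) (hj : j ≤ L.length) :
    (M.contract' {x | x ∈ (L.take j).drop i}).IsPyramid 𝒮 (L.take i ++ L.drop j) a q d := by
  rw [isPyramid_iff] at hP
  rw [contract'_eq_contract, isPyramid_iff]
  obtain ⟨hnd, hLind, hne, hrk, hskew, hspread, hthick⟩ := hP
  set C := {x | x ∈ (L.take j).drop i}
  have hperm := List.perm_take_append_drop_append_drop_take (l := L) hij
  have hnd' := List.nodup_append.1 (hperm.nodup_iff.2 hnd)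
  have hsplit : {x | x ∈ L.take i ++ L.drop j} ∪ C = {x | x ∈ L} := by
    ext x
    simp [C, ← hperm.mem_iff, or_assoc]
  have hdisj : Disjoint {x | x ∈ L.take i ++ L.drop j} C :=
    disjoint_left.2 fun x hx hxC ↦ hnd'.2.2 x hx x hxC rfl
  have hCL : C ⊆ {x | x ∈ L} := hsplit ▸ subset_union_right
  have hskewC : ∀ S ∈ 𝒮, (M ／ S).Indep C := fun S hS ↦ (hskew S hS).subset hCL
  refine ⟨hnd'.1, (hLind.subset hCL).contract_indep_iff.2 ⟨hdisj, hsplit ▸ hLind⟩, hne,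
    fun S hS ↦ ⟨?_, ?_⟩, fun S hS ↦ ?_, fun k hk ↦ ?_, fun S hS ↦ ?_⟩
  · exact subset_sdiff.2 ⟨(hrk S hS).1, (subset_sdiff.1 (hskewC S hS).subset_ground).2.symm⟩
  · rw [rk_contract_eq (hskewC S hS), (hrk S hS).2]
  · rw [contract_comm, (hskewC S hS).contract_indep_iff]
    exact ⟨hdisj, hsplit ▸ hskew S hS⟩
  · simp only [List.length_append, List.length_take, List.length_drop] at hk
    rcases lt_or_ge k i with hki | hik
    · exact spreads_contract_drop_take_of_lt hnd hki hij hj hskew (hspread k (by omega))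
    · exact spreads_contract_drop_take_of_le hik hij hj (hspread _ (by omega))
  · show ((M ／ C) ↾ S).Thick d
    rw [contract_restrict_eq_restrict (hskewC S hS)]
    exact hthick S hS

/-- If `(M, 𝒮; e_1, …, e_h)` is an `(a,q,h,d)`-pyramid and `0 ≤ i ≤ j ≤ h`,
then `(M / {e_{i+1}, …, e_j}, 𝒮; e_1, …, e_i, e_{j+1}, …, e_h)` is an
`(a, q, h-(j-i), d)`-pyramid. -/
theorem statement16 {α : Type*} (a q d : ℕ) (ha : 1 ≤ a) (hq : 1 ≤ q) (hd : 1 ≤ d)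
    (M : Matroid α) (hM : M.Finite) (𝒮 : Finset (Set α)) (L : List α)
    (hP : M.IsPyramid 𝒮 L a q d) (i j : ℕ) (hij : i ≤ j) (hj : j ≤ L.length) :
    (M.contract' {x | x ∈ (L.take j).drop i}).IsPyramid 𝒮 (L.take i ++ L.drop j) a q d :=
  statement16_general a q d M hM 𝒮 L hP i j hij hj

end Matroid
end
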